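/- arXiv:math/0201111 — 2 statements merged into one kernel-verified Lean document; each statement's English description precedes it below -/
import Mathlib

section
/- Let $F: \mathbb{N}^s \to \mathbb{Z}[z][[q]]$ (for each length $s \geq 1$) be a family of functions satisfying $F(b_1,\dots,b_{s-1}, b_s + 1) = F(b_1,\dots,b_{s-1}, b_s) + z q^{n+1} F(b_1,\dots,b_{s-1}+1, b_s)$ where $n = b_1 + \cdots + b_s$, together with the base case $F(b_1,\dots,b_{s-1}, 0) = F(b_1,\dots,b_{s-1})$ (dropping the last entry). Then for all $b_1,\dots,b_s$ with $n = b_1+\cdots+b_s$: $F(b_1,\dots,b_s) = \sum_{j=0}^{b_s} F(b_1,\dots,b_{s-2}, b_{s-1}+j) \, z^j q^{j(n - b_s + j)} \binom{b_s}{j}_q$. -/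
/-!
Fix the prefix `l` and view `F (l ++ [c, b])` as a function `G c b` of the last two entries, and
write `s` for `l.sum`.
Induct on `b`: one application of the recursion writes `G c (b + 1)` through `G c b` and
`G (c + 1) b`, both of which expand by the induction hypothesis. After shifting the index of the
first sum, the two sums combine term by term through the second `q`-Pascal identity
`[m+1, j+1] = [m, j+1] + q^(m-j) [m, j]`, the extra factor `q^(b-j)` being exactly what the
exponent `s + c + b + 1` of the recursion contributes beyond the summand's `(j+1)(s + c + j + 1)`.
-/

/-- The Gaussian binomial coefficient as a polynomial in `q`, defined by the
standard `q`-Pascal recursion `[m+1, k+1] = q^(k+1) [m, k+1] + [m, k]`. -/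
noncomputable def gaussBinom : ℕ → ℕ → Polynomial ℤ
  | _, 0 => 1
  | 0, _ + 1 => 0
  | m + 1, k + 1 => gaussBinom m (k + 1) * Polynomial.X ^ (k + 1) + gaussBinom m k
  termination_by m k => (m, k)

open Finset Polynomial

lemma gaussBinom_zero_right (m : ℕ) : gaussBinom m 0 = 1 := by rw [gaussBinom]

lemma gaussBinom_succ_succ (m k : ℕ) :
    gaussBinom (m + 1) (k + 1) = gaussBinom m (k + 1) * X ^ (k + 1) + gaussBinom m k := by
  rw [gaussBinom]

lemma gaussBinom_eq_zero_of_lt : ∀ {m k : ℕ}, m < k → gaussBinom m k = 0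
  | 0, _ + 1, _ => by rw [gaussBinom]
  | m + 1, k + 1, h => by
    rw [gaussBinom_succ_succ, gaussBinom_eq_zero_of_lt (by omega : m < k + 1),
      gaussBinom_eq_zero_of_lt (by omega : m < k), zero_mul, add_zero]

lemma gaussBinom_succ_succ' : ∀ m j : ℕ,
    gaussBinom (m + 1) (j + 1) = gaussBinom m (j + 1) + X ^ (m - j) * gaussBinom m j
  | 0, 0 => by simp [gaussBinom_succ_succ, gaussBinom_zero_right, gaussBinom_eq_zero_of_lt]
  | 0, j + 1 => by simp [gaussBinom_eq_zero_of_lt]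
  | m + 1, 0 => by
    rw [gaussBinom_succ_succ (m + 1)]
    conv_lhs => rw [gaussBinom_succ_succ' m 0]
    conv_rhs => rw [gaussBinom_succ_succ m 0]
    simp only [gaussBinom_zero_right, Nat.sub_zero]
    ring
  | m + 1, j + 1 => by
    rw [gaussBinom_succ_succ (m + 1), Nat.add_sub_add_right]
    conv_lhs => rw [gaussBinom_succ_succ' m (j + 1), gaussBinom_succ_succ' m j]
    conv_rhs => rw [gaussBinom_succ_succ m (j + 1), gaussBinom_succ_succ m j]
    rcases lt_or_ge j m with hjm | hmj
    · obtain ⟨d, rfl⟩ : ∃ d, m = j + 1 + d := ⟨m - (j + 1), by omega⟩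
      rw [show j + 1 + d - (j + 1) = d by omega, show j + 1 + d - j = d + 1 by omega]
      ring
    · rw [gaussBinom_eq_zero_of_lt (by omega : m < j + 1)]
      ring

theorem eq_sum_gaussBinom_of_rec {R : Type*} [CommRing R] (G : ℕ → ℕ → R) (H : ℕ → R)
    (s : ℕ) (z q : R)
    (hrec : ∀ c b, G c (b + 1) = G c b + z * q ^ (s + c + b + 1) * G (c + 1) b)
    (hbase : ∀ c, G c 0 = H c) (c b : ℕ) :
    G c b = ∑ j ∈ range (b + 1),
      H (c + j) * z ^ j * q ^ (j * (s + c + j)) * eval₂ (Int.castRingHom R) q (gaussBinom b j) := by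
  induction b generalizing c with
  | zero => simp [hbase, gaussBinom_zero_right]
  | succ b ih =>
    set φ := eval₂ (Int.castRingHom R) q
    have hφ0 : φ (gaussBinom b (b + 1)) = 0 := by
      simp [φ, gaussBinom_eq_zero_of_lt]
    have hshift : G c b = H c + ∑ j ∈ range (b + 1),
        H (c + (j + 1)) * z ^ (j + 1) * q ^ ((j + 1) * (s + c + (j + 1))) *
          φ (gaussBinom b (j + 1)) := by
      rw [ih, sum_range_succ', sum_range_succ _ b, hφ0]
      simp [gaussBinom_zero_right, φ, add_comm]
    have hterm : ∀ j ∈ range (b + 1),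
        H (c + (j + 1)) * z ^ (j + 1) * q ^ ((j + 1) * (s + c + (j + 1))) *
            φ (gaussBinom b (j + 1)) +
          z * q ^ (s + c + b + 1) *
            (H (c + 1 + j) * z ^ j * q ^ (j * (s + (c + 1) + j)) * φ (gaussBinom b j)) =
        H (c + (j + 1)) * z ^ (j + 1) * q ^ ((j + 1) * (s + c + (j + 1))) *
          φ (gaussBinom (b + 1) (j + 1)) := by
      intro j hj
      obtain ⟨d, rfl⟩ : ∃ d, b = j + d := ⟨b - j, by simp at hj; omega⟩
      rw [gaussBinom_succ_succ', Nat.add_sub_cancel_left, show c + 1 + j = c + (j + 1) by ring]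
      simp only [φ, eval₂_add, eval₂_mul, eval₂_X_pow]
      ring
    rw [hrec, hshift, ih (c + 1), mul_sum, add_assoc, ← sum_add_distrib, sum_congr rfl hterm,
      sum_range_succ' _ (b + 1)]
    simp [gaussBinom_zero_right, φ, add_comm]

theorem stmt_7_general (F : List ℕ → PowerSeries (Polynomial ℤ))
    (z : PowerSeries (Polynomial ℤ))
    (q : PowerSeries (Polynomial ℤ))
    (hrec : ∀ (l : List ℕ) (c b : ℕ),
      F (l ++ [c, b + 1]) = F (l ++ [c, b]) + z * q ^ (l.sum + c + b + 1) * F (l ++ [c + 1, b]))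
    (hbase : ∀ l : List ℕ, F (l ++ [0]) = F l) :
    ∀ (l : List ℕ) (c b : ℕ),
      F (l ++ [c, b]) = ∑ j ∈ Finset.range (b + 1),
        F (l ++ [c + j]) * z ^ j * q ^ (j * (l.sum + c + j)) *
          Polynomial.eval₂ (Int.castRingHom (PowerSeries (Polynomial ℤ))) q (gaussBinom b j) := by
  intro l
  refine eq_sum_gaussBinom_of_rec (fun c b => F (l ++ [c, b])) (fun c => F (l ++ [c])) l.sum z q
    (hrec l) fun c => ?_
  simpa using hbase (l ++ [c])

theorem stmt_7 (F : List ℕ → PowerSeries (Polynomial ℤ))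
    (z : PowerSeries (Polynomial ℤ)) (hz : z = PowerSeries.C (R := Polynomial ℤ) Polynomial.X)
    (q : PowerSeries (Polynomial ℤ)) (hq : q = PowerSeries.X)
    (hrec : ∀ (l : List ℕ) (c b : ℕ),
      F (l ++ [c, b + 1]) = F (l ++ [c, b]) + z * q ^ (l.sum + c + b + 1) * F (l ++ [c + 1, b]))
    (hbase : ∀ l : List ℕ, F (l ++ [0]) = F l) :
    ∀ (l : List ℕ) (c b : ℕ),
      F (l ++ [c, b]) = ∑ j ∈ Finset.range (b + 1),
        F (l ++ [c + j]) * z ^ j * q ^ (j * (l.sum + c + j)) *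
          Polynomial.eval₂ (Int.castRingHom (PowerSeries (Polynomial ℤ))) q (gaussBinom b j) :=
  stmt_7_general F z q hrec hbase
end

section
/- Let $V(0) \subseteq V(1) \subseteq \cdots \subseteq V(r) = W$ be a filtration of a finite-dimensional complex vector space $W$, let $G = \mathbb{C}[z_1,\dots,z_n] \otimes W$ be the space of $W$-valued polynomials, and with $s = z_1 - z_2$, $t = z_1 + z_2$, write each $g \in G$ as $g = \sum_i s^i g_i(t, z_3, \dots, z_n)$. Let $G^c = \{ g \in G : g_i \text{ takes values in } V(i) \text{ for all } i \le r \}$. Then $G^c$ is a free $\mathbb{C}[z_1,\dots,z_n]$-module of rank $\dim W$; explicitly, if $w_1,\dots,w_l$ is a basis of $W$ adapted to the filtration (i.e., $w_1,\dots,w_{k(i)}$ is a basis of $V(i)$), then the elements $s^{d(j)} w_j$ (where $d(j)$ is the filtration level of $w_j$) form a basis of $G^c$ over $\mathbb{C}[z_1,\dots,z_n]$. -/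
/-!
Expand `g ∈ ℂ[z] ⊗ W` in the basis `1 ⊗ w_j` of the free module `ℂ[z] ⊗ W`, with coordinates
`a_j ∈ ℂ[z]`. Taking the `s^i`-coefficient commutes with taking coordinates, and the
`s^i`-coefficient of an element of `ℂ[z] ⊗ V(i)` has no component along `w_j` for `j ≥ k(i)`.
Hence `g ∈ G^c` forces the coefficients of `s^i` in `a_j` to vanish for all `i < d(j)`, i.e.
`s^{d(j)} ∣ a_j`; as `ℂ[z]` is a domain, the quotients are the unique coordinates of `g` in the
family `s^{d(j)} w_j`.
-/

open TensorProduct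

/-- Extraction of the coefficient of `s^i`, where `s` is the variable `X 0` of
`ℂ[s, t, z_3, …, z_n]` (with `n = m + 2` variables), as a `ℂ`-linear map to the
polynomial ring in the remaining variables. -/
noncomputable def coeffS (m i : ℕ) :
    MvPolynomial (Fin (m + 2)) ℂ →ₗ[ℂ] MvPolynomial (Fin (m + 1)) ℂ :=
  (LinearMap.restrictScalars ℂ (Polynomial.lcoeff (MvPolynomial (Fin (m + 1)) ℂ) i)).comp
    (MvPolynomial.finSuccEquiv ℂ (m + 1)).toLinearMap

/-- The condition cutting out `G^c`: each coefficient `g_i` of `s^i` takes values in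
`V i`, i.e. lies in the image of `B ⊗ V i → B ⊗ W`. -/
def memGc (m r : ℕ) (W : Type) [AddCommGroup W] [Module ℂ W] (V : ℕ → Submodule ℂ W)
    (g : MvPolynomial (Fin (m + 2)) ℂ ⊗[ℂ] W) : Prop :=
  ∀ i ≤ r, LinearMap.rTensor W (coeffS m i) g ∈
    LinearMap.range (LinearMap.lTensor (MvPolynomial (Fin (m + 1)) ℂ) (V i).subtype)

/-- The proposed basis element `s^{d(j)} ⊗ w_j`. -/
noncomputable def basVec (m lW : ℕ) (W : Type) [AddCommGroup W] [Module ℂ W]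
    (w : Fin lW → W) (d : Fin lW → ℕ) (j : Fin lW) :
    MvPolynomial (Fin (m + 2)) ℂ ⊗[ℂ] W :=
  ((MvPolynomial.X 0 : MvPolynomial (Fin (m + 2)) ℂ) ^ d j) ⊗ₜ[ℂ] w j

open MvPolynomial

namespace Module.Basis

variable {R ι M : Type*} [CommSemiring R] [AddCommMonoid M] [Module R M] (b : Basis ι R M)
  {A B : Type*} [Semiring A] [Algebra R A] [Semiring B] [Algebra R B]

theorem baseChange_repr_rTensor (f : A →ₗ[R] B) (y : A ⊗[R] M) (j : ι) :
    (b.baseChange B).repr (f.rTensor M y) j = f ((b.baseChange A).repr y j) := by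
  induction y using TensorProduct.induction_on with
  | zero => simp
  | tmul x v => simp
  | add y₁ y₂ h₁ h₂ => simp [h₁, h₂]

theorem baseChange_repr_eq_zero_of_mem_range_lTensor {s : Set ι} {y : B ⊗[R] M}
    (hy : y ∈ LinearMap.range ((Submodule.span R (b '' s)).subtype.lTensor B))
    {j : ι} (hj : j ∉ s) : (b.baseChange B).repr y j = 0 := by
  obtain ⟨x, rfl⟩ := hy
  induction x using TensorProduct.induction_on with
  | zero => simp
  | tmul x v =>
    have hv : b.repr v j = 0 :=
      Finsupp.notMem_support_iff.1 fun h ↦ hj (b.repr_support_subset_of_mem_span s v.2 h)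
    simp [hv]
  | add x₁ x₂ h₁ h₂ => simp [h₁, h₂]

theorem existsUnique_eq_sum_smul_smul_of_dvd {R M : Type*} [CommRing R] [IsDomain R]
    [AddCommGroup M] [Module R M] [Fintype ι] (b : Basis ι R M) {a : ι → R} (ha : ∀ j, a j ≠ 0)
    {x : M} (hx : ∀ j, a j ∣ b.repr x j) : ∃! c : ι → R, x = ∑ j, c j • a j • b j := by
  choose c hc using hx
  simp_rw [smul_smul]
  refine ⟨c, ?_, fun c' hc' ↦ funext fun j ↦ mul_left_cancel₀ (ha j) ?_⟩
  · beta_reduce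
    conv_lhs => rw [← b.sum_repr x]
    simp_rw [hc, mul_comm]
  · rw [← hc, hc', b.repr_sum_self, mul_comm]

end Module.Basis

theorem coeffS_X_zero_pow (m i e : ℕ) :
    coeffS m i (X 0 ^ e) = if i = e then 1 else 0 := by
  simp [coeffS, finSuccEquiv_X_zero, Polynomial.coeff_X_pow]

theorem X_zero_pow_dvd_of_coeffS_eq_zero {m e : ℕ} {p : MvPolynomial (Fin (m + 2)) ℂ}
    (hp : ∀ i < e, coeffS m i p = 0) : X 0 ^ e ∣ p := by
  obtain ⟨q, hq⟩ : Polynomial.X ^ e ∣ finSuccEquiv ℂ (m + 1) p := Polynomial.X_pow_dvd_iff.2 hp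
  refine ⟨(finSuccEquiv ℂ (m + 1)).symm q, (finSuccEquiv ℂ (m + 1)).injective ?_⟩
  rw [hq, map_mul, map_pow, finSuccEquiv_X_zero, AlgEquiv.apply_symm_apply]

section Gc

variable {m r : ℕ} {W : Type} [AddCommGroup W] [Module ℂ W] {V : ℕ → Submodule ℂ W}

theorem basVec_memGc {lW : ℕ} {w : Fin lW → W} {d : Fin lW → ℕ} {j : Fin lW}
    (hj : w j ∈ V (d j)) : memGc m r W V (basVec m lW W w d j) := by
  intro i _
  rw [basVec, LinearMap.rTensor_tmul, coeffS_X_zero_pow]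
  split_ifs with h
  · subst h
    exact ⟨1 ⊗ₜ ⟨w j, hj⟩, rfl⟩
  · rw [TensorProduct.zero_tmul]
    exact zero_mem _

theorem X_zero_pow_dvd_baseChange_repr_of_memGc {ι : Type*} (b : Module.Basis ι ℂ W)
    {S : ℕ → Set ι} (hV : ∀ i ≤ r, V i = Submodule.span ℂ (b '' S i))
    {g : MvPolynomial (Fin (m + 2)) ℂ ⊗[ℂ] W} (hg : memGc m r W V g)
    {j : ι} {e : ℕ} (he : e ≤ r) (hj : ∀ i < e, j ∉ S i) :
    X 0 ^ e ∣ (b.baseChange _).repr g j := by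
  refine X_zero_pow_dvd_of_coeffS_eq_zero fun i hi ↦ ?_
  have hir : i ≤ r := by omega
  rw [← b.baseChange_repr_rTensor]
  exact b.baseChange_repr_eq_zero_of_mem_range_lTensor (hV i hir ▸ hg i hir) (hj i hi)

end Gc

theorem stmt_14_general (m r lW : ℕ) (W : Type) [AddCommGroup W] [Module ℂ W]
    (V : ℕ → Submodule ℂ W) (htop : V r = ⊤)
    (w : Fin lW → W) (hind : LinearIndependent ℂ w)
    (kf : ℕ → ℕ) (hkf : ∀ i ≤ r, V i = Submodule.span ℂ (w '' {j | (j : ℕ) < kf i}))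
    (hkr : kf r = lW)
    (d : Fin lW → ℕ) (hd : ∀ j : Fin lW, ((j : ℕ) < kf (d j)) ∧ ∀ i < d j, kf i ≤ (j : ℕ)) :
    (∀ j : Fin lW, memGc m r W V (basVec m lW W w d j)) ∧
    ∀ g : MvPolynomial (Fin (m + 2)) ℂ ⊗[ℂ] W, memGc m r W V g →
      ∃! c : Fin lW → MvPolynomial (Fin (m + 2)) ℂ,
        g = ∑ j : Fin lW, c j • basVec m lW W w d j := by
  have hspan : ⊤ ≤ Submodule.span ℂ (Set.range w) := by
    rw [← htop, hkf r le_rfl, hkr]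
    exact Submodule.span_mono (Set.image_subset_range _ _)
  let b := Module.Basis.mk hind hspan
  have hb : ⇑b = w := Module.Basis.coe_mk hind hspan
  have hkf' : ∀ i ≤ r, V i = Submodule.span ℂ (b '' {j | (j : ℕ) < kf i}) := hb ▸ hkf
  have hdr : ∀ j, d j ≤ r := fun j ↦
    le_of_not_gt fun h ↦ ((hd j).2 r h).not_gt (hkr ▸ j.is_lt : (j : ℕ) < kf r)
  have hw : ∀ j, w j ∈ V (d j) := fun j ↦ by
    rw [hkf _ (hdr j)]
    exact Submodule.subset_span ⟨j, (hd j).1, rfl⟩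
  refine ⟨fun j ↦ basVec_memGc (hw j), fun g hg ↦ ?_⟩
  have hbas : ∀ j, basVec m lW W w d j =
      (X 0 : MvPolynomial (Fin (m + 2)) ℂ) ^ d j • b.baseChange _ j := by
    simp [basVec, TensorProduct.smul_tmul', hb]
  simp_rw [hbas]
  refine (b.baseChange (MvPolynomial (Fin (m + 2)) ℂ)).existsUnique_eq_sum_smul_smul_of_dvd
    (a := fun j ↦ X 0 ^ d j) (fun _ ↦ pow_ne_zero _ (X_ne_zero 0)) fun j ↦ ?_
  exact X_zero_pow_dvd_baseChange_repr_of_memGc b hkf' hg (hdr j)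
    fun i hi ↦ not_lt.2 ((hd j).2 i hi)

theorem stmt_14 (m r lW : ℕ) (W : Type) [AddCommGroup W] [Module ℂ W]
    [FiniteDimensional ℂ W]
    (V : ℕ → Submodule ℂ W) (hmono : Monotone V) (htop : V r = ⊤)
    (w : Fin lW → W) (hind : LinearIndependent ℂ w)
    (kf : ℕ → ℕ) (hkf : ∀ i ≤ r, V i = Submodule.span ℂ (w '' {j | (j : ℕ) < kf i}))
    (hkr : kf r = lW)
    (d : Fin lW → ℕ) (hd : ∀ j : Fin lW, ((j : ℕ) < kf (d j)) ∧ ∀ i < d j, kf i ≤ (j : ℕ)) :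
    (∀ j : Fin lW, memGc m r W V (basVec m lW W w d j)) ∧
    ∀ g : MvPolynomial (Fin (m + 2)) ℂ ⊗[ℂ] W, memGc m r W V g →
      ∃! c : Fin lW → MvPolynomial (Fin (m + 2)) ℂ,
        g = ∑ j : Fin lW, c j • basVec m lW W w d j :=
  stmt_14_general m r lW W V htop w hind kf hkf hkr d hd
end
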